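/- arXiv:2512.16079 — 8 statements merged into one kernel-verified Lean document; each statement's English description precedes it below -/
import Mathlib

section
/- Let G act primitively on a finite set Ω with G^Ω nonabelian, let F be a field, and let V be a witness of lindim_F(G,Ω) afforded by a representation (ρ, φ). Suppose V is not irreducible, i.e. there exists a ρ(G)-invariant subspace of V other than 0 and V. Then V has a unique ρ(G)-invariant subspace W with 0 ≠ W ≠ V; this W has codimension one in V and is irreducible (the only ρ(G)-invariant subspaces properly contained in W are 0). In particular, V is not the direct sum of two nonzero ρ(G)-invariant subspaces. -/
/-- A representation of the action of `G` on `Ω` over the field `F`: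
an injective map `φ : Ω → V` intertwining the `G`-action on `Ω` with a linear
`G`-action `ρ` on `V`. -/
def IsActionRep (F : Type*) [Field F] {G : Type*} [Group G] {Ω : Type*} [MulAction G Ω]
    {V : Type*} [AddCommGroup V] [Module F V]
    (ρ : G →* (V ≃ₗ[F] V)) (φ : Ω → V) : Prop :=
  Function.Injective φ ∧ ∀ (g : G) (ω : Ω), φ (g • ω) = ρ g (φ ω)

/-- The `F`-linear dimension of the action of `G` on `Ω`: the infimum (in `ℕ∞`) of the
dimensions of finite-dimensional `F`-vector spaces affording a representation of the action. -/
noncomputable def lindim (F : Type*) [Field F] (G : Type*) [Group G] (Ω : Type*)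
    [MulAction G Ω] : ℕ∞ :=
  ⨅ (n : ℕ) (_ : ∃ (ρ : G →* ((Fin n → F) ≃ₗ[F] (Fin n → F))) (φ : Ω → (Fin n → F)),
      IsActionRep F ρ φ), (n : ℕ∞)


/-- The action of `G` on `Ω` is primitive: it is transitive and every `G`-block is trivial. -/
def IsPrimitiveAction (G : Type*) [Group G] (Ω : Type*) [MulAction G Ω] : Prop :=
  MulAction.IsPretransitive G Ω ∧
    ∀ B : Set Ω, MulAction.IsBlock G B → MulAction.IsTrivialBlock B

/-- A subspace `W ≤ V` is invariant under the linear `G`-action `ρ`. -/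
def IsInvariantSubspace {F : Type*} [Field F] {G : Type*} [Group G]
    {V : Type*} [AddCommGroup V] [Module F V]
    (ρ : G →* (V ≃ₗ[F] V)) (W : Submodule F V) : Prop :=
  ∀ (g : G), ∀ v ∈ W, ρ g v ∈ W

section Aux

variable {F : Type*} [Field F] {G : Type*} [Group G] {Ω : Type*} [MulAction G Ω]
  {V : Type*} [AddCommGroup V] [Module F V]

/-- Transport a linear `G`-action along a linear equivalence. -/
def ActionRep.conjRep {V' : Type*} [AddCommGroup V'] [Module F V'] (e : V ≃ₗ[F] V')
    (ρ : G →* (V ≃ₗ[F] V)) : G →* (V' ≃ₗ[F] V') where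
  toFun g := (e.symm.trans (ρ g)).trans e
  map_one' := by ext x; simp
  map_mul' g h := LinearEquiv.ext fun x => by
    show e ((ρ (g * h)) (e.symm x)) = e ((ρ g) (e.symm (e ((ρ h) (e.symm x)))))
    rw [map_mul, e.symm_apply_apply]; rfl

lemma ActionRep.lindim_le_rep [FiniteDimensional F V] (ρ : G →* (V ≃ₗ[F] V)) (φ : Ω → V)
    (h : IsActionRep F ρ φ) : lindim F G Ω ≤ (Module.finrank F V : ℕ∞) := by
  set n := Module.finrank F V with hn
  let e : V ≃ₗ[F] (Fin n → F) := (Module.finBasis F V).equivFun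
  apply iInf₂_le n
  refine ⟨ActionRep.conjRep e ρ, e ∘ φ, e.injective.comp h.1, fun g ω => ?_⟩
  simp [ActionRep.conjRep, LinearEquiv.trans_apply, h.2 g ω]

lemma ActionRep.map_eq {ρ : G →* (V ≃ₗ[F] V)} {U : Submodule F V}
    (hU : IsInvariantSubspace ρ U) (g : G) :
    U.map (ρ g : V →ₗ[F] V) = U := by
  apply le_antisymm
  · rintro _ ⟨v, hv, rfl⟩; exact hU g v hv
  · intro v hv
    refine ⟨ρ g⁻¹ v, hU g⁻¹ v hv, ?_⟩
    show (ρ g) ((ρ g⁻¹) v) = v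
    rw [map_inv]
    exact (ρ g).apply_symm_apply v

/-- Restriction of a linear `G`-action to an invariant subspace. -/
def ActionRep.subRep (ρ : G →* (V ≃ₗ[F] V)) (U : Submodule F V)
    (hU : IsInvariantSubspace ρ U) : G →* (U ≃ₗ[F] U) where
  toFun g := (ρ g).ofSubmodules U U (ActionRep.map_eq hU g)
  map_one' := LinearEquiv.ext fun x => Subtype.ext <| by
    simp [LinearEquiv.ofSubmodules_apply]
  map_mul' g h := LinearEquiv.ext fun x => Subtype.ext <| by
    show (((ρ (g * h)).ofSubmodules U U (ActionRep.map_eq hU (g * h))) x : V)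
        = (((ρ g).ofSubmodules U U (ActionRep.map_eq hU g))
            (((ρ h).ofSubmodules U U (ActionRep.map_eq hU h)) x) : V)
    simp only [LinearEquiv.ofSubmodules_apply, map_mul]
    rfl

/-- The linear `G`-action induced on the quotient by an invariant subspace. -/
def ActionRep.quotRep (ρ : G →* (V ≃ₗ[F] V)) (W : Submodule F V)
    (hW : IsInvariantSubspace ρ W) : G →* ((V ⧸ W) ≃ₗ[F] (V ⧸ W)) where
  toFun g := Submodule.Quotient.equiv W W (ρ g) (ActionRep.map_eq hW g)
  map_one' := LinearEquiv.ext fun x => by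
    refine Submodule.Quotient.induction_on _ x (fun v => ?_)
    simp [Submodule.Quotient.equiv, Submodule.mapQ_apply]
  map_mul' g h := LinearEquiv.ext fun x => by
    refine Submodule.Quotient.induction_on _ x (fun v => ?_)
    show Submodule.Quotient.equiv W W (ρ (g * h)) (ActionRep.map_eq hW (g * h))
          (Submodule.Quotient.mk v)
        = (Submodule.Quotient.equiv W W (ρ g) (ActionRep.map_eq hW g))
            ((Submodule.Quotient.equiv W W (ρ h) (ActionRep.map_eq hW h))
              (Submodule.Quotient.mk v))
    simp only [Submodule.Quotient.equiv_apply, Submodule.mapQ_apply, map_mul]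
    rfl

lemma ActionRep.quotRep_mk (ρ : G →* (V ≃ₗ[F] V)) (W : Submodule F V)
    (hW : IsInvariantSubspace ρ W) (g : G) (v : V) :
    ActionRep.quotRep ρ W hW g (Submodule.Quotient.mk v) = Submodule.Quotient.mk (ρ g v) := by
  simp [ActionRep.quotRep, Submodule.Quotient.equiv, Submodule.mapQ_apply]

/-- Key lemma: for a minimal-dimensional representation of a primitive action, every nonzero
invariant subspace contains all the differences `φ ω - φ ω'`. -/
lemma ActionRep.diff_mem [FiniteDimensional F V] (hprim : IsPrimitiveAction G Ω)
    (ρ : G →* (V ≃ₗ[F] V)) (φ : Ω → V) (hrep : IsActionRep F ρ φ)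
    (hwit : (Module.finrank F V : ℕ∞) = lindim F G Ω)
    (W : Submodule F V) (hW : IsInvariantSubspace ρ W) (hWb : W ≠ ⊥) :
    ∀ ω ω' : Ω, φ ω - φ ω' ∈ W := by
  by_cases hinj : Function.Injective (fun ω => W.mkQ (φ ω))
  · exfalso
    have hrep' : IsActionRep F (ActionRep.quotRep ρ W hW) (fun ω => W.mkQ (φ ω)) := by
      refine ⟨hinj, fun g ω => ?_⟩
      show W.mkQ (φ (g • ω)) = ActionRep.quotRep ρ W hW g (W.mkQ (φ ω))
      rw [Submodule.mkQ_apply, Submodule.mkQ_apply, ActionRep.quotRep_mk, hrep.2]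
    have hle := ActionRep.lindim_le_rep _ _ hrep'
    rw [← hwit, Nat.cast_le] at hle
    have hq := Submodule.finrank_quotient_add_finrank W
    have hpos : 0 < Module.finrank F W := by
      rw [Nat.pos_iff_ne_zero, Ne, Submodule.finrank_eq_zero]
      exact hWb
    omega
  · rw [Function.not_injective_iff] at hinj
    obtain ⟨ω₁, ω₂, heq, hne⟩ := hinj
    have h12 : φ ω₁ - φ ω₂ ∈ W := (Submodule.Quotient.eq W).mp heq
    set B : Set Ω := {ω | φ ω - φ ω₁ ∈ W} with hB
    have step : ∀ (g : G) (a : Ω), a ∈ B → g • a ∈ B → ∀ x ∈ B, g • x ∈ B := by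
      intro g a ha hga x hx
      have key : φ (g • x) - φ ω₁ = ρ g (φ x - φ a) + (φ (g • a) - φ ω₁) := by
        rw [hrep.2, hrep.2, map_sub]; abel
      have h1 : φ x - φ a ∈ W := by
        have := W.sub_mem hx ha
        rwa [sub_sub_sub_cancel_right] at this
      show φ (g • x) - φ ω₁ ∈ W
      rw [key]
      exact W.add_mem (hW g _ h1) hga
    have hblock : MulAction.IsBlock G B := by
      rw [MulAction.isBlock_iff_smul_eq_of_mem]
      intro g a ha hga
      apply subset_antisymm
      · rintro _ ⟨x, hx, rfl⟩
        exact step g a ha hga x hx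
      · intro x hx
        refine ⟨g⁻¹ • x, step g⁻¹ (g • a) hga (by simpa using ha) x hx, by simp⟩
    have hω₁ : ω₁ ∈ B := by show φ ω₁ - φ ω₁ ∈ W; simp
    have hω₂ : ω₂ ∈ B := by
      show φ ω₂ - φ ω₁ ∈ W
      have := W.neg_mem h12
      rwa [neg_sub] at this
    have huniv : B = Set.univ := by
      rcases hprim.2 B hblock with h | h
      · exact absurd (h hω₁ hω₂) hne
      · exact h
    intro ω ω'
    have hω : ω ∈ B := huniv ▸ Set.mem_univ ω
    have hω' : ω' ∈ B := huniv ▸ Set.mem_univ ω'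
    have := W.sub_mem hω hω'
    rwa [sub_sub_sub_cancel_right] at this

end Aux

/-- Let `G` act primitively on a finite set `Ω` with `G^Ω` nonabelian, and let
`V` be a witness of `lindim_F(G, Ω)` afforded by `(ρ, φ)`. If `V` is not irreducible, then it
has a unique proper nonzero `ρ(G)`-invariant subspace `W`; this `W` has codimension one and is
irreducible, and `V` is not the direct sum of two nonzero invariant subspaces. -/
theorem witness_unique_submodule_of_primitive (F : Type*) [Field F] (G : Type*) [Group G]
    (Ω : Type*) [Fintype Ω] [MulAction G Ω] (hprim : IsPrimitiveAction G Ω)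
    (hnab : ¬ ∀ x y : (MulAction.toPermHom G Ω).range, x * y = y * x)
    (V : Type*) [AddCommGroup V] [Module F V] [FiniteDimensional F V]
    (ρ : G →* (V ≃ₗ[F] V)) (φ : Ω → V) (hrep : IsActionRep F ρ φ)
    (hwit : (Module.finrank F V : ℕ∞) = lindim F G Ω)
    (hred : ∃ W : Submodule F V, IsInvariantSubspace ρ W ∧ W ≠ ⊥ ∧ W ≠ ⊤) :
    (∃! W : Submodule F V, IsInvariantSubspace ρ W ∧ W ≠ ⊥ ∧ W ≠ ⊤) ∧
    (∀ W : Submodule F V, IsInvariantSubspace ρ W → W ≠ ⊥ → W ≠ ⊤ →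
      Module.finrank F (V ⧸ W) = 1 ∧
      ∀ W' : Submodule F V, IsInvariantSubspace ρ W' → W' < W → W' = ⊥) ∧
    ¬ ∃ W₁ W₂ : Submodule F V, IsInvariantSubspace ρ W₁ ∧ IsInvariantSubspace ρ W₂ ∧
        W₁ ≠ ⊥ ∧ W₂ ≠ ⊥ ∧ W₁ ≠ ⊤ ∧ W₂ ≠ ⊤ ∧ IsCompl W₁ W₂ := by
  classical
  obtain ⟨W₀, hW₀i, hW₀b, hW₀t⟩ := hred
  -- If `Ω` were subsingleton, `lindim = 0`, contradicting the existence of `W₀ ≠ ⊥`.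
  have hsmall : ¬ Subsingleton Ω := by
    intro hs
    have h0 : lindim F G Ω ≤ ((0 : ℕ) : ℕ∞) := by
      have := ActionRep.lindim_le_rep (F := F) (Ω := Ω) (V := Fin 0 → F)
        (1 : G →* ((Fin 0 → F) ≃ₗ[F] (Fin 0 → F))) (fun _ => 0)
        ⟨fun a b _ => Subsingleton.elim a b, fun g ω => rfl⟩
      simpa using this
    rw [← hwit, Nat.cast_le, Nat.le_zero] at h0
    have : ∀ x : V, x = 0 := finrank_zero_iff_forall_zero.mp h0
    apply hW₀b
    rw [Submodule.eq_bot_iff]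
    exact fun x _ => this x
  have hΩ : Nonempty Ω := by
    rcases isEmpty_or_nonempty Ω with h | h
    · exact absurd (by infer_instance) hsmall
    · exact h
  obtain ⟨ω₀⟩ := hΩ
  -- the span of differences
  set D : Submodule F V := Submodule.span F {v | ∃ ω ω' : Ω, φ ω - φ ω' = v} with hD
  have hdiff : ∀ W : Submodule F V, IsInvariantSubspace ρ W → W ≠ ⊥ →
      ∀ ω ω' : Ω, φ ω - φ ω' ∈ W :=
    fun W hWi hWb => ActionRep.diff_mem hprim ρ φ hrep hwit W hWi hWb
  have hDinv : IsInvariantSubspace ρ D := by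
    intro g v hv
    induction hv using Submodule.span_induction with
    | mem x hx =>
        obtain ⟨ω, ω', rfl⟩ := hx
        exact Submodule.subset_span ⟨g • ω, g • ω', by rw [hrep.2, hrep.2, map_sub]⟩
    | zero => simp
    | add x y _ _ hx hy => rw [map_add]; exact D.add_mem hx hy
    | smul c x _ hx => rw [map_smul]; exact D.smul_mem c hx
  have hDb : D ≠ ⊥ := by
    intro h0
    apply hsmall
    refine ⟨fun a b => hrep.1 ?_⟩
    have : φ a - φ b ∈ D := Submodule.subset_span ⟨a, b, rfl⟩
    rw [h0, Submodule.mem_bot, sub_eq_zero] at this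
    exact this
  -- every nonzero invariant subspace `W` satisfies `W ⊔ F∙φω₀ = ⊤`
  have hsup : ∀ W : Submodule F V, IsInvariantSubspace ρ W → W ≠ ⊥ →
      W ⊔ (F ∙ (φ ω₀)) = ⊤ := by
    intro W hWi hWb
    set U := W ⊔ (F ∙ (φ ω₀)) with hU
    have hWU : W ≤ U := le_sup_left
    have hφU : ∀ ω, φ ω ∈ U := by
      intro ω
      have h1 : φ ω = (φ ω - φ ω₀) + φ ω₀ := by abel
      rw [h1]
      exact U.add_mem (hWU (hdiff W hWi hWb ω ω₀))
        (le_sup_right (a := W) (Submodule.mem_span_singleton_self (φ ω₀)))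
    have hUinv : IsInvariantSubspace ρ U := by
      intro g v hv
      rcases Submodule.mem_sup.mp hv with ⟨w, hw, z, hz, rfl⟩
      obtain ⟨c, rfl⟩ := Submodule.mem_span_singleton.mp hz
      rw [map_add, map_smul]
      refine U.add_mem (hWU (hWi g w hw)) (U.smul_mem c ?_)
      rw [← hrep.2]
      exact hφU (g • ω₀)
    have hrepU : IsActionRep F (ActionRep.subRep ρ U hUinv) (fun ω => ⟨φ ω, hφU ω⟩) := by
      constructor
      · intro a b h
        exact hrep.1 (congrArg Subtype.val h)
      · intro g ω
        apply Subtype.ext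
        show φ (g • ω) = ((ρ g).ofSubmodules U U _ ⟨φ ω, hφU ω⟩ : V)
        rw [LinearEquiv.ofSubmodules_apply]
        exact hrep.2 g ω
    have hle := ActionRep.lindim_le_rep _ _ hrepU
    rw [← hwit, Nat.cast_le] at hle
    exact Submodule.eq_top_of_finrank_eq (le_antisymm (Submodule.finrank_le U) hle)
  have hnotmem : ∀ W : Submodule F V, IsInvariantSubspace ρ W → W ≠ ⊥ → W ≠ ⊤ →
      φ ω₀ ∉ W := by
    intro W hWi hWb hWt hmem
    apply hWt
    have h1 : (F ∙ (φ ω₀)) ≤ W := by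
      rw [Submodule.span_singleton_le_iff_mem]; exact hmem
    have := hsup W hWi hWb
    rwa [sup_eq_left.mpr h1] at this
  -- every proper nonzero invariant subspace equals `D`
  have hDt : D ≠ ⊤ := by
    intro h
    apply hW₀t
    apply le_antisymm le_top
    rw [← h]
    apply Submodule.span_le.mpr
    rintro v ⟨ω, ω', rfl⟩
    exact hdiff W₀ hW₀i hW₀b ω ω'
  have heqD : ∀ W : Submodule F V, IsInvariantSubspace ρ W → W ≠ ⊥ → W ≠ ⊤ → W = D := by
    intro W hWi hWb hWt
    have hDW : D ≤ W := by
      apply Submodule.span_le.mpr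
      rintro v ⟨ω, ω', rfl⟩
      exact hdiff W hWi hWb ω ω'
    refine le_antisymm ?_ hDW
    intro w hw
    have htop : w ∈ D ⊔ (F ∙ (φ ω₀)) := by rw [hsup D hDinv hDb]; trivial
    rcases Submodule.mem_sup.mp htop with ⟨d, hd, z, hz, hsum⟩
    obtain ⟨c, rfl⟩ := Submodule.mem_span_singleton.mp hz
    by_cases hc : c = 0
    · rw [hc, zero_smul, add_zero] at hsum
      rwa [← hsum]
    · exfalso
      apply hnotmem W hWi hWb hWt
      have : φ ω₀ = c⁻¹ • (w - d) := by
        rw [← hsum]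
        rw [add_sub_cancel_left, smul_smul, inv_mul_cancel₀ hc, one_smul]
      rw [this]
      exact W.smul_mem _ (W.sub_mem hw (hDW hd))
  refine ⟨⟨W₀, ⟨hW₀i, hW₀b, hW₀t⟩, fun W hW =>
      (heqD W hW.1 hW.2.1 hW.2.2).trans (heqD W₀ hW₀i hW₀b hW₀t).symm⟩, ?_, ?_⟩
  · intro W hWi hWb hWt
    constructor
    · -- codimension one
      have hnz : W.mkQ (φ ω₀) ≠ 0 := by
        rw [Submodule.mkQ_apply, Ne, Submodule.Quotient.mk_eq_zero]
        exact hnotmem W hWi hWb hWt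
      have hmap : (F ∙ (W.mkQ (φ ω₀))) = ⊤ := by
        have h1 : Submodule.map W.mkQ (W ⊔ (F ∙ (φ ω₀))) = ⊤ := by
          rw [hsup W hWi hWb, Submodule.map_top, Submodule.range_mkQ]
        rw [Submodule.map_sup, Submodule.map_span, Set.image_singleton] at h1
        have h2 : Submodule.map W.mkQ W = ⊥ := by
          rw [Submodule.eq_bot_iff]
          rintro _ ⟨w, hw, rfl⟩
          rw [Submodule.mkQ_apply, Submodule.Quotient.mk_eq_zero]
          exact hw
        rwa [h2, bot_sup_eq] at h1
      have := finrank_span_singleton (K := F) hnz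
      rw [hmap, finrank_top] at this
      exact this
    · intro W' hW'i hW'lt
      by_contra hW'b
      have hW't : W' ≠ ⊤ := by
        intro h
        rw [h] at hW'lt
        exact not_top_lt hW'lt
      have := (heqD W' hW'i hW'b hW't).trans (heqD W hWi hWb hWt).symm
      exact absurd this (ne_of_lt hW'lt)
  · rintro ⟨W₁, W₂, h1i, h2i, h1b, h2b, h1t, h2t, hcompl⟩
    have he : W₁ = W₂ := (heqD W₁ h1i h1b h1t).trans (heqD W₂ h2i h2b h2t).symm
    have hd := hcompl.disjoint
    rw [he, disjoint_self] at hd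
    exact h2b hd
end

section
/- Let G act on a set Ω, and let L ⊆ F be a field extension of finite degree ℓ = [F : L] (i.e. F is an L-algebra which is a field with dim_L F = ℓ). Then lindim_F(G, Ω) ≤ lindim_L(G, Ω) ≤ ℓ · lindim_F(G, Ω). -/
/-- Any finite-dimensional space affording a representation bounds `lindim`. -/
lemma lindim_le_of_rep {K : Type*} [Field K] {V : Type*} [AddCommGroup V] [Module K V]
    [FiniteDimensional K V] {G : Type*} [Group G] {Ω : Type*} [MulAction G Ω]
    (ρ : G →* (V ≃ₗ[K] V)) (φ : Ω → V) (h : IsActionRep K ρ φ) :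
    lindim K G Ω ≤ (Module.finrank K V : ℕ∞) := by
  set n := Module.finrank K V
  let e : V ≃ₗ[K] (Fin n → K) := (Module.finBasis K V).equivFun
  let ρ' : G →* ((Fin n → K) ≃ₗ[K] (Fin n → K)) :=
    { toFun := fun g => (e.symm.trans (ρ g)).trans e
      map_one' := by ext x; simp
      map_mul' := fun g h => by
        have hm : ∀ (a b : V ≃ₗ[K] V) (x : V), (a * b) x = a (b x) := fun _ _ _ => rfl
        have hm2 : ∀ (a b : (Fin n → K) ≃ₗ[K] (Fin n → K)) (x : Fin n → K),
            (a * b) x = a (b x) := fun _ _ _ => rfl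
        ext x
        simp [map_mul, hm, hm2, LinearEquiv.trans_apply] }
  have hrep : IsActionRep K ρ' (e ∘ φ) := by
    refine ⟨e.injective.comp h.1, fun g ω => ?_⟩
    simp [ρ', h.2 g ω, LinearEquiv.trans_apply]
  exact iInf₂_le n ⟨ρ', e ∘ φ, hrep⟩

open Matrix in
/-- Extension of scalars for automorphisms of `Fin n → L`, via matrices. -/
noncomputable def matconv (L F : Type*) [Field L] [Field F] [Algebra L F] (n : ℕ) :
    ((Fin n → L) ≃ₗ[L] (Fin n → L)) →* ((Fin n → F) ≃ₗ[F] (Fin n → F)) :=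
  (LinearMap.GeneralLinearGroup.generalLinearEquiv F (Fin n → F)).toMonoidHom.comp
    ((Matrix.GeneralLinearGroup.toLin.toMonoidHom).comp
      ((Matrix.GeneralLinearGroup.map (algebraMap L F)).comp
        (Matrix.GeneralLinearGroup.toLin.symm.toMonoidHom.comp
          (LinearMap.GeneralLinearGroup.generalLinearEquiv L (Fin n → L)).symm.toMonoidHom)))

lemma matconv_apply {L F : Type*} [Field L] [Field F] [Algebra L F] {n : ℕ}
    (e : (Fin n → L) ≃ₗ[L] (Fin n → L)) (w : Fin n → L) :
    matconv L F n e (fun i => algebraMap L F (w i)) = fun i => algebraMap L F (e w i) := by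
  funext i
  show ((LinearMap.toMatrix' (e : (Fin n → L) →ₗ[L] (Fin n → L))).map
      (algebraMap L F)).mulVec (fun j => algebraMap L F (w j)) i = _
  rw [show (fun j => algebraMap L F (w j)) = (algebraMap L F) ∘ w from rfl,
    ← RingHom.map_mulVec, ← Matrix.toLin'_apply, Matrix.toLin'_toMatrix']
  rfl

/-- If `L ⊆ F` is a field extension of finite degree `ℓ = [F : L]`, then
`lindim_F(G, Ω) ≤ lindim_L(G, Ω) ≤ ℓ · lindim_F(G, Ω)`. -/
theorem lindim_field_extension (L F : Type*) [Field L] [Field F] [Algebra L F]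
    [FiniteDimensional L F] (G : Type*) [Group G] (Ω : Type*) [MulAction G Ω] :
    lindim F G Ω ≤ lindim L G Ω ∧
      lindim L G Ω ≤ (Module.finrank L F : ℕ∞) * lindim F G Ω := by
  constructor
  · -- `lindim F ≤ lindim L` : extend scalars of an `L`-representation.
    refine le_iInf₂ fun n hn => ?_
    obtain ⟨ρ, φ, hφ, hint⟩ := hn
    let ρF : G →* ((Fin n → F) ≃ₗ[F] (Fin n → F)) := (matconv L F n).comp ρ
    let φF : Ω → (Fin n → F) := fun ω i => algebraMap L F (φ ω i)
    have hrep : IsActionRep F ρF φF := by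
      constructor
      · intro ω₁ ω₂ h
        apply hφ
        funext i
        exact (algebraMap L F).injective (congrFun h i)
      · intro g ω
        show (fun i => algebraMap L F (φ (g • ω) i)) = matconv L F n (ρ g) (φF ω)
        rw [show φF ω = fun i => algebraMap L F (φ ω i) from rfl, matconv_apply]
        funext i
        rw [hint g ω]
    have := lindim_le_of_rep ρF φF hrep
    simpa [Module.finrank_fin_fun] using this
  · -- `lindim L ≤ ℓ · lindim F` : restrict scalars of an `F`-representation.
    classical
    by_cases hS : ∃ n, ∃ (ρ : G →* ((Fin n → F) ≃ₗ[F] (Fin n → F))) (φ : Ω → (Fin n → F)),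
        IsActionRep F ρ φ
    · set m := Nat.find hS with hm
      obtain ⟨ρ, φ, hφ, hint⟩ := Nat.find_spec hS
      let ρL : G →* ((Fin m → F) ≃ₗ[L] (Fin m → F)) :=
        { toFun := fun g => (ρ g).restrictScalars L
          map_one' := by
            ext x i
            show (ρ 1) x i = x i
            rw [map_one]; rfl
          map_mul' := fun g h => by
            ext x i
            show (ρ (g * h)) x i = (ρ g) ((ρ h) x) i
            rw [map_mul]; rfl }
      have hrepL : IsActionRep L ρL φ := ⟨hφ, fun g ω => hint g ω⟩
      have h1 : lindim L G Ω ≤ (Module.finrank L (Fin m → F) : ℕ∞) :=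
        lindim_le_of_rep ρL φ hrepL
      have h2 : Module.finrank L (Fin m → F) = m * Module.finrank L F := by
        simp [Module.finrank_pi_fintype, Finset.sum_const, mul_comm]
      have h3 : (m : ℕ∞) ≤ lindim F G Ω :=
        le_iInf₂ fun n hn => by exact_mod_cast Nat.find_min' hS hn
      calc lindim L G Ω ≤ (Module.finrank L (Fin m → F) : ℕ∞) := h1
        _ = (Module.finrank L F : ℕ∞) * (m : ℕ∞) := by
            rw [h2]; push_cast; ring
        _ ≤ (Module.finrank L F : ℕ∞) * lindim F G Ω := mul_le_mul_right h3 _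
    · have htop : lindim F G Ω = ⊤ := by
        rw [lindim, iInf_eq_top]
        intro n
        rw [iInf_eq_top]
        intro hn
        exact absurd ⟨n, hn⟩ hS
      rw [htop, ENat.mul_top]
      · exact le_top
      · exact_mod_cast (Module.finrank_pos (R := L) (M := F)).ne'
end

section
/- Let G be a finite group acting on a set Ω and F a field. If lindim_F(G, Ω) = 1, then the induced permutation group G^Ω (the image of the permutation representation G → Equiv.Perm Ω) is a cyclic group. -/
/-- If `G` is a finite group acting on `Ω` with `lindim_F(G, Ω) = 1`, then the
induced permutation group `G^Ω` is cyclic. -/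
theorem isCyclic_of_lindim_eq_one (F : Type*) [Field F] (G : Type*) [Group G] [Finite G]
    (Ω : Type*) [MulAction G Ω] (h : lindim F G Ω = 1) :
    IsCyclic (MulAction.toPermHom G Ω).range := by
  -- extract a representation with n = 1
  have h2 : lindim F G Ω < 2 := by rw [h]; norm_num
  rw [lindim, iInf_lt_iff] at h2
  obtain ⟨n, hn⟩ := h2
  rw [iInf_lt_iff] at hn
  obtain ⟨hP, hn⟩ := hn
  have hn1 : n = 1 := by
    have hne : n ≠ 0 := by
      rintro rfl
      have : lindim F G Ω ≤ 0 := by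
        rw [lindim]
        exact iInf_le_of_le 0 (iInf_le _ hP)
      rw [h] at this
      exact absurd this (by norm_num)
    have : (n : ℕ∞) < 2 := hn
    have : n < 2 := by exact_mod_cast this
    omega
  subst hn1
  obtain ⟨ρ, φ, hinj, hint⟩ := hP
  -- every linear equiv of `Fin 1 → F` is scalar
  have key : ∀ (g : G) (v : Fin 1 → F), ρ g v = v 0 • (ρ g 1) := by
    intro g v
    have hv : v = v 0 • (1 : Fin 1 → F) := by
      funext i
      have : i = 0 := Subsingleton.elim i 0
      subst this
      simp
    conv_lhs => rw [hv]
    rw [map_smul]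
  -- the scalar map as a hom to `Fˣ`
  have hvalinv : ∀ g : G, (ρ g 1) 0 * (ρ g⁻¹ 1) 0 = 1 := by
    intro g
    have h1 : ρ g (ρ g⁻¹ (1 : Fin 1 → F)) = 1 := by
      have : ρ g * ρ g⁻¹ = 1 := by rw [← map_mul, mul_inv_cancel, map_one]
      calc ρ g (ρ g⁻¹ (1 : Fin 1 → F)) = (ρ g * ρ g⁻¹) (1 : Fin 1 → F) := rfl
        _ = 1 := by rw [this]; rfl
    have h2 : ρ g (ρ g⁻¹ (1 : Fin 1 → F)) = (ρ g⁻¹ 1) 0 • (ρ g 1) := key g _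
    have := congrFun (h2.symm.trans h1) 0
    simpa [mul_comm] using this
  let c : G →* Fˣ :=
    { toFun := fun g => ⟨(ρ g 1) 0, (ρ g⁻¹ 1) 0, hvalinv g, by
        have := hvalinv g⁻¹; simpa [mul_comm] using this⟩
      map_one' := by
        ext
        simp
      map_mul' := by
        intro g g'
        ext
        show (ρ (g * g') 1) 0 = (ρ g 1) 0 * (ρ g' 1) 0
        have h1 : ρ (g * g') (1 : Fin 1 → F) = (ρ g' 1) 0 • (ρ g 1) := by
          rw [map_mul]
          exact key g _
        have h2 := congrFun h1 0
        rw [h2, Pi.smul_apply, smul_eq_mul, mul_comm] }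
  -- kernel containment
  have hker : c.ker ≤ (MulAction.toPermHom G Ω).ker := by
    intro g hg
    have hg1 : (ρ g 1) 0 = 1 := congrArg Units.val hg
    have : ∀ ω : Ω, g • ω = ω := by
      intro ω
      apply hinj
      rw [hint g ω, key g (φ ω)]
      funext i
      have : i = 0 := Subsingleton.elim i 0
      subst this
      simp [hg1]
    rw [MonoidHom.mem_ker]
    ext ω
    simpa using this ω
  -- the range of c is a finite subgroup of Fˣ, hence cyclic
  have hfin : Finite c.range := Set.Finite.to_subtype (Set.finite_range c)
  have hc1 : IsCyclic c.range := subgroup_units_cyclic c.range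
  have hc2 : IsCyclic (G ⧸ c.ker) :=
    isCyclic_of_surjective (QuotientGroup.quotientKerEquivRange c).symm
      (QuotientGroup.quotientKerEquivRange c).symm.surjective
  have hc3 : IsCyclic (G ⧸ (MulAction.toPermHom G Ω).ker) := by
    refine isCyclic_of_surjective
      (QuotientGroup.map c.ker (MulAction.toPermHom G Ω).ker (MonoidHom.id G) (by simpa using hker)) ?_
    intro x
    obtain ⟨g, rfl⟩ := QuotientGroup.mk_surjective x
    exact ⟨QuotientGroup.mk g, rfl⟩
  exact isCyclic_of_surjective (QuotientGroup.quotientKerEquivRange (MulAction.toPermHom G Ω))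
    (QuotientGroup.quotientKerEquivRange (MulAction.toPermHom G Ω)).surjective
end

section
/- Let G act on a set Ω with kernel K (the kernel of the permutation representation G → Equiv.Perm Ω), and let F be a field. Then, with the induced action of the quotient group G/K on Ω, lindim_F(G, Ω) = lindim_F(G/K, Ω). -/
/-- If `K` is the kernel of the action of `G` on `Ω`, then for the induced
action of `G/K` on `Ω` (i.e. any action satisfying `(gK) • ω = g • ω`) we have
`lindim_F(G, Ω) = lindim_F(G/K, Ω)`. -/
theorem lindim_quotient_kernel (F : Type*) [Field F] (G : Type*) [Group G]
    (Ω : Type*) [MulAction G Ω]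
    [MulAction (G ⧸ (MulAction.toPermHom G Ω).ker) Ω]
    (hcompat : ∀ (g : G) (ω : Ω),
      (QuotientGroup.mk g : G ⧸ (MulAction.toPermHom G Ω).ker) • ω = g • ω) :
    lindim F G Ω = lindim F (G ⧸ (MulAction.toPermHom G Ω).ker) Ω := by
  set K := (MulAction.toPermHom G Ω).ker with hKdef
  apply le_antisymm
  · -- pull back a G/K representation along the quotient map
    refine le_iInf fun n => le_iInf fun hn => ?_
    obtain ⟨ρ', φ, hinj, hint⟩ := hn
    refine iInf₂_le n ⟨ρ'.comp (QuotientGroup.mk' K), φ, hinj, fun g ω => ?_⟩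
    rw [← hcompat g ω, hint]
    rfl
  · refine le_iInf fun n => le_iInf fun hn => ?_
    obtain ⟨ρ, φ, hinj, hint⟩ := hn
    set W : Submodule F (Fin n → F) := Submodule.span F (Set.range φ) with hW
    have himg : ∀ g : G, ρ g '' Set.range φ = Set.range φ := by
      intro g
      ext v
      constructor
      · rintro ⟨_, ⟨ω, rfl⟩, rfl⟩
        exact ⟨g • ω, hint g ω⟩
      · rintro ⟨ω, rfl⟩
        exact ⟨φ (g⁻¹ • ω), ⟨_, rfl⟩, by rw [← hint, smul_inv_smul]⟩
    have hmap : ∀ g : G,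
        Submodule.map ((ρ g : (Fin n → F) ≃ₗ[F] (Fin n → F)) :
          (Fin n → F) →ₗ[F] (Fin n → F)) W = W := by
      intro g
      rw [hW, Submodule.map_span]
      congr 1
      simpa using himg g
    let f : G → (W ≃ₗ[F] W) := fun g =>
      ((ρ g).submoduleMap W).trans (LinearEquiv.ofEq _ _ (hmap g))
    have hf : ∀ g (x : W), (f g x : Fin n → F) = ρ g x := fun g x => rfl
    let ρW : G →* (W ≃ₗ[F] W) :=
      { toFun := f
        map_one' := LinearEquiv.ext fun x => Subtype.ext (by rw [hf]; simp)
        map_mul' := fun g h => LinearEquiv.ext fun x => Subtype.ext (by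
          have : ((f g * f h) x : Fin n → F) = f g (f h x) := rfl
          rw [this, hf, hf, hf, map_mul]
          rfl) }
    have hρW : ∀ g (x : W), (ρW g x : Fin n → F) = ρ g x := hf
    have hker : ∀ k ∈ K, ρW k = 1 := by
      intro k hk
      have hkfix : ∀ ω : Ω, k • ω = ω := by
        intro ω
        have h1 : MulAction.toPermHom G Ω k = 1 := MonoidHom.mem_ker.mp hk
        have : MulAction.toPermHom G Ω k ω = ω := by rw [h1]; rfl
        simpa [MulAction.toPermHom] using this
      have hfix : ∀ x ∈ W, ρ k x = x := by
        intro x hx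
        induction hx using Submodule.span_induction with
        | mem v hv => obtain ⟨ω, rfl⟩ := hv; rw [← hint, hkfix]
        | zero => simp
        | add a b _ _ ha hb => simp [map_add, ha, hb]
        | smul c a _ ha => simp [map_smul, ha]
      exact LinearEquiv.ext fun x => Subtype.ext ((hρW k x).trans (hfix x x.2))
    let ρ' : (G ⧸ K) →* (W ≃ₗ[F] W) := QuotientGroup.lift K ρW hker
    let φW : Ω → W := fun ω => ⟨φ ω, Submodule.subset_span ⟨ω, rfl⟩⟩
    have hφWinj : Function.Injective φW := fun a b h =>
      hinj (congrArg Subtype.val h)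
    have hintW : ∀ (q : G ⧸ K) (ω : Ω), φW (q • ω) = ρ' q (φW ω) := by
      intro q ω
      induction q using QuotientGroup.induction_on with
      | H g =>
        have h1 : ρ' (QuotientGroup.mk g) = ρW g := QuotientGroup.lift_mk' K hker g
        rw [hcompat, h1]
        exact Subtype.ext ((hint g ω).trans (hρW g (φW ω)).symm)
    -- transport to Fin m → F
    have hfd : FiniteDimensional F W := inferInstance
    set m := Module.finrank F W with hm
    let e : W ≃ₗ[F] (Fin m → F) := (Module.finBasis F W).equivFun
    let ρ'' : (G ⧸ K) →* ((Fin m → F) ≃ₗ[F] (Fin m → F)) :=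
      { toFun := fun q => (e.symm.trans (ρ' q)).trans e
        map_one' := by ext x; simp
        map_mul' := fun p q => LinearEquiv.ext fun x => by
          show e ((ρ' (p * q)) (e.symm x)) =
            e ((ρ' p) (e.symm (e ((ρ' q) (e.symm x)))))
          rw [map_mul ρ' p q, LinearEquiv.symm_apply_apply]
          rfl }
    have hmn : m ≤ n := by
      have h1 := Submodule.finrank_le W
      rwa [Module.finrank_fin_fun] at h1
    refine le_trans (iInf₂_le m ⟨ρ'', fun ω => e (φW ω),
      e.injective.comp hφWinj, fun q ω => ?_⟩) (by exact_mod_cast hmn)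
    show e (φW (q • ω)) = ((e.symm.trans (ρ' q)).trans e) (e (φW ω))
    rw [hintW]
    simp
end

section
/- Let G act primitively on Ω with G^Ω not cyclic, and let V be an F-vector space affording a representation (ρ, φ) of the action with V spanned by {φ(ω) | ω ∈ Ω}. Let U be a ρ(G)-invariant subspace of V with dim_F(V/U) ≥ 2. Then the induced map Ω → V/U sending ω to the coset φ(ω) + U is injective. -/
/-- Let `G` act primitively on `Ω` with `G^Ω` not cyclic, let `V` afford a
representation `(ρ, φ)` with `V` spanned by the image of `φ`, and let `U` be a
`ρ(G)`-invariant subspace of codimension at least `2`. Then `ω ↦ φ(ω) + U` is injective. -/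
theorem quotient_map_injective_of_primitive (F : Type*) [Field F] (G : Type*) [Group G]
    (Ω : Type*) [MulAction G Ω] (hprim : IsPrimitiveAction G Ω)
    (hnc : ¬ IsCyclic (MulAction.toPermHom G Ω).range)
    (V : Type*) [AddCommGroup V] [Module F V]
    (ρ : G →* (V ≃ₗ[F] V)) (φ : Ω → V) (hrep : IsActionRep F ρ φ)
    (hspan : Submodule.span F (Set.range φ) = ⊤)
    (U : Submodule F V) (hU : ∀ (g : G), ∀ u ∈ U, ρ g u ∈ U)
    (hcodim : 2 ≤ Module.rank F (V ⧸ U)) :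
    Function.Injective (fun ω : Ω => (Submodule.Quotient.mk (φ ω) : V ⧸ U)) := by
  set ψ : Ω → V ⧸ U := fun ω => (Submodule.Quotient.mk (φ ω) : V ⧸ U) with hψ
  -- key: ψ is "equivariant" in the sense that it preserves equalities under the action
  have key : ∀ (g : G) (a b : Ω), ψ a = ψ b → ψ (g • a) = ψ (g • b) := by
    intro g a b hab
    rw [hψ] at hab ⊢
    simp only [Submodule.Quotient.eq] at hab ⊢
    rw [hrep.2 g a, hrep.2 g b, ← map_sub]
    exact hU g _ hab
  intro ω₁ ω₂ h12
  by_contra hne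
  -- the fiber of ψ over ψ ω₁ is a block
  set B : Set Ω := {ω | ψ ω = ψ ω₁} with hB
  have hblock : MulAction.IsBlock G B := by
    intro g₁ g₂ hgne
    by_contra hdisj
    apply hgne
    rw [Set.not_disjoint_iff] at hdisj
    obtain ⟨x, ⟨a, ha, rfl⟩, b, hb, hba⟩ := hdisj
    dsimp only at hba
    have ha' : ψ a = ψ ω₁ := ha
    have hb' : ψ b = ψ ω₁ := hb
    have hx : ψ (g₂⁻¹ • (g₁ • a)) = ψ ω₁ := by
      rw [← hba, inv_smul_smul]; exact hb'
    ext ω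
    simp only [B, Set.mem_smul_set_iff_inv_smul_mem, Set.mem_setOf_eq]
    constructor
    · intro hω
      have h1 : ψ (g₁⁻¹ • ω) = ψ a := hω.trans ha'.symm
      have h2 : ψ ω = ψ (g₁ • a) := by
        have := key g₁ _ _ h1; rwa [smul_inv_smul] at this
      exact (key g₂⁻¹ _ _ h2).trans hx
    · intro hω
      have h1 : ψ (g₂⁻¹ • ω) = ψ b := hω.trans hb'.symm
      have h2 : ψ ω = ψ (g₂ • b) := by
        have := key g₂ _ _ h1; rwa [smul_inv_smul] at this
      rw [hba] at h2
      have h3 := key g₁⁻¹ _ _ h2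
      rw [inv_smul_smul] at h3
      exact h3.trans ha'
  have htriv := hprim.2 B hblock
  have h1B : ω₁ ∈ B := rfl
  have h2B : ω₂ ∈ B := h12.symm
  rcases htriv with hsub | huniv
  · exact hne (hsub h1B h2B)
  · -- ψ is constant, so V⧸U is spanned by one element, contradicting rank ≥ 2
    have hconst : ∀ ω : Ω, ψ ω = ψ ω₁ := fun ω => show ω ∈ B from huniv.symm ▸ Set.mem_univ ω
    have htop : (⊤ : Submodule F (V ⧸ U)) = Submodule.span F {ψ ω₁} := by
      have : Submodule.map U.mkQ (Submodule.span F (Set.range φ)) =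
          Submodule.span F (U.mkQ '' Set.range φ) := Submodule.map_span _ _
      rw [hspan, Submodule.map_top, Submodule.range_mkQ] at this
      rw [this]
      apply le_antisymm
      · rw [Submodule.span_le]
        rintro _ ⟨_, ⟨ω, rfl⟩, rfl⟩
        exact Submodule.subset_span (hconst ω)
      · rw [Submodule.span_le]
        rintro _ rfl
        exact Submodule.subset_span ⟨φ ω₁, ⟨ω₁, rfl⟩, rfl⟩
    have hrank : Module.rank F (V ⧸ U) ≤ 1 := by
      have := rank_span_le (R := F) (M := V ⧸ U) {ψ ω₁}
      rw [← htop] at this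
      simpa using this.trans (by simp : (Cardinal.mk ({ψ ω₁} : Set (V ⧸ U))) ≤ 1)
    exact absurd (hcodim.trans hrank) (by norm_num)
end

section
/- Let G act primitively on Ω with G^Ω not cyclic, let F be a field, and let U be a G-invariant subspace of the permutation module F^Ω = (Ω →₀ F) with dim_F((Ω →₀ F)/U) ≥ 2. Then the quotient module (Ω →₀ F)/U affords a representation of the action of G on Ω: the map Ω → (Ω →₀ F)/U sending ω to the coset e_ω + U is injective and satisfies the intertwining property for the induced G-action on the quotient. -/
/-! The fibres of a `G`-equivariant map are blocks, so an equivariant map out of a primitive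
`G`-set is either injective or constant. The map `ω ↦ e_ω + U` is equivariant for the action on
the quotient induced by the permutation representation; were it constant, the single coset
`e_ω + U` would span the quotient, contradicting `2 ≤ dim ((Ω →₀ F) ⧸ U)`. -/

open Function MulAction

def Representation.toLinearEquivHom {k G V : Type*} [CommSemiring k] [Group G] [AddCommMonoid V]
    [Module k V] (ρ : Representation k G V) : G →* (V ≃ₗ[k] V) :=
  (LinearMap.GeneralLinearGroup.generalLinearEquiv k V).toMonoidHom.comp ρ.asGroupHom

noncomputable def permRepresentation (k G Ω : Type*) [CommSemiring k] [Monoid G]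
    [MulAction G Ω] : Representation k G (Ω →₀ k) where
  toFun g := Finsupp.lmapDomain k k (g • ·)
  map_one' := by ext; simp
  map_mul' g h := by ext; simp [mul_smul]

theorem MulActionHom.injective_or_exists_forall_eq_of_isTrivialBlock {G Ω X : Type*} [Group G]
    [MulAction G Ω] [MulAction G X]
    (hblocks : ∀ B : Set Ω, IsBlock G B → IsTrivialBlock B) (f : Ω →[G] X) :
    Injective f ∨ ∃ x, ∀ ω, f ω = x := by
  refine or_iff_not_imp_right.mpr fun hnonconst a b hab => ?_
  rcases hblocks (f ⁻¹' {f a}) ((IsBlock.singleton (a := f a)).preimage f) with hsub | huniv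
  · exact hsub rfl hab.symm
  · exact (hnonconst ⟨f a, Set.eq_univ_iff_forall.mp huniv⟩).elim

theorem rank_quotient_le_one_of_mk_single_eq {K Ω : Type*} [DivisionRing K]
    {U : Submodule K (Ω →₀ K)} (v : (Ω →₀ K) ⧸ U)
    (hv : ∀ ω, Submodule.Quotient.mk (Finsupp.single ω 1) = v) :
    Module.rank K ((Ω →₀ K) ⧸ U) ≤ 1 := by
  refine rank_le_one_iff.mpr ⟨v, fun q => ?_⟩
  induction q using Submodule.Quotient.induction_on with
  | _ x =>
    induction x using Finsupp.induction_linear with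
    | zero => exact ⟨0, by simp⟩
    | add x y hx hy =>
      obtain ⟨r, hr⟩ := hx
      obtain ⟨s, hs⟩ := hy
      exact ⟨r + s, by rw [add_smul, hr, hs, Submodule.Quotient.mk_add]⟩
    | single ω c =>
      exact ⟨c, by rw [← hv ω, ← Submodule.Quotient.mk_smul, Finsupp.smul_single_one]⟩

theorem quotient_of_permutation_module_affords_general (F : Type*) [Field F] (G : Type*) [Group G]
    (Ω : Type*) [MulAction G Ω] (hprim : IsPrimitiveAction G Ω)
    (U : Submodule F (Ω →₀ F))
    (hU : ∀ (g : G), ∀ x ∈ U, Finsupp.lmapDomain F F (fun ω : Ω => g • ω) x ∈ U)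
    (hcodim : 2 ≤ Module.rank F ((Ω →₀ F) ⧸ U)) :
    ∃ ρ : G →* (((Ω →₀ F) ⧸ U) ≃ₗ[F] ((Ω →₀ F) ⧸ U)),
      (∀ (g : G) (x : Ω →₀ F),
        ρ g (Submodule.Quotient.mk x) =
          Submodule.Quotient.mk (Finsupp.lmapDomain F F (fun ω : Ω => g • ω) x)) ∧
      IsActionRep F ρ
        (fun ω : Ω => (Submodule.Quotient.mk (Finsupp.single ω 1) : (Ω →₀ F) ⧸ U)) := by
  set ρ := ((permRepresentation F G Ω).quotient U hU).toLinearEquivHom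
  have hρ : ∀ (g : G) (x : Ω →₀ F), ρ g (Submodule.Quotient.mk x) =
      Submodule.Quotient.mk (Finsupp.lmapDomain F F (fun ω : Ω => g • ω) x) := fun _ _ => rfl
  have hsingle : ∀ (g : G) (ω : Ω), (Submodule.Quotient.mk (Finsupp.single (g • ω) 1) :
      (Ω →₀ F) ⧸ U) = ρ g (Submodule.Quotient.mk (Finsupp.single ω 1)) := by
    intro g ω
    rw [hρ, Finsupp.lmapDomain_apply, Finsupp.mapDomain_single]
  let _ : MulAction G ((Ω →₀ F) ⧸ U) := MulAction.compHom _ ρ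
  let f : Ω →[G] (Ω →₀ F) ⧸ U := ⟨fun ω => Submodule.Quotient.mk (Finsupp.single ω 1), hsingle⟩
  refine ⟨ρ, hρ, ?_, hsingle⟩
  rcases f.injective_or_exists_forall_eq_of_isTrivialBlock hprim.2 with hinj | ⟨v, hv⟩
  · exact hinj
  · exact absurd (hcodim.trans (rank_quotient_le_one_of_mk_single_eq v hv)) (by norm_num)

/-- Let `G` act primitively on `Ω` with `G^Ω` not cyclic, and let `U` be a
`G`-invariant subspace of the permutation module `Ω →₀ F` whose quotient has dimension at
least `2`. Then the quotient affords a representation of the group action: the induced linear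
`G`-action on `(Ω →₀ F) ⧸ U` together with the injective map `ω ↦ e_ω + U`. -/
theorem quotient_of_permutation_module_affords (F : Type*) [Field F] (G : Type*) [Group G]
    (Ω : Type*) [MulAction G Ω] (hprim : IsPrimitiveAction G Ω)
    (hnc : ¬ IsCyclic (MulAction.toPermHom G Ω).range)
    (U : Submodule F (Ω →₀ F))
    (hU : ∀ (g : G), ∀ x ∈ U, Finsupp.lmapDomain F F (fun ω : Ω => g • ω) x ∈ U)
    (hcodim : 2 ≤ Module.rank F ((Ω →₀ F) ⧸ U)) :
    ∃ ρ : G →* (((Ω →₀ F) ⧸ U) ≃ₗ[F] ((Ω →₀ F) ⧸ U)),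
      (∀ (g : G) (x : Ω →₀ F),
        ρ g (Submodule.Quotient.mk x) =
          Submodule.Quotient.mk (Finsupp.lmapDomain F F (fun ω : Ω => g • ω) x)) ∧
      IsActionRep F ρ
        (fun ω : Ω => (Submodule.Quotient.mk (Finsupp.single ω 1) : (Ω →₀ F) ⧸ U)) :=
  quotient_of_permutation_module_affords_general F G Ω hprim U hU hcodim
end

section
/- Let G act faithfully and primitively on Ω, with G not cyclic, let F be a field, and let U be a G-invariant subspace of the permutation module F^Ω = (Ω →₀ F) with dim_F((Ω →₀ F)/U) ≥ 2. Then G acts faithfully on the quotient (Ω →₀ F)/U: if g ∈ G fixes every coset x + U (i.e. g • x − x ∈ U for all x ∈ Ω →₀ F), then g = 1. -/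
/-!
If `g` acts trivially on `(Ω →₀ F) ⧸ U` but moves some point `ω`, then `e_ω ≡ e_{g • ω}` modulo
`U`. Congruence of basis vectors modulo the invariant subspace `U` is a `G`-invariant equivalence
relation on `Ω`, so the class of `ω` is a block; it contains two points, so by primitivity it is
all of `Ω`. Then every basis vector has the same image in the quotient, which therefore has
dimension at most `1`.
-/

open MulAction Pointwise

theorem MulAction.smul_preimage_singleton {G X Y : Type*} [Group G] [MulAction G X] (f : X → Y)
    (hf : ∀ (g : G) (a b : X), f a = f b → f (g • a) = f (g • b)) (g : G) (a : X) :
    g • (f ⁻¹' {f a}) = f ⁻¹' {f (g • a)} := by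
  ext b
  rw [Set.mem_smul_set_iff_inv_smul_mem]
  refine ⟨fun hb => ?_, fun hb => ?_⟩
  · simpa using hf g _ _ hb
  · simpa using hf g⁻¹ _ _ hb

theorem MulAction.isBlock_preimage_singleton {G X Y : Type*} [Group G] [MulAction G X] (f : X → Y)
    (hf : ∀ (g : G) (a b : X), f a = f b → f (g • a) = f (g • b)) (x : X) :
    IsBlock G (f ⁻¹' {f x}) := by
  rw [isBlock_iff_smul_eq_of_mem]
  intro g a (ha : f a = f x) (hga : f (g • a) = f x)
  rw [← ha, smul_preimage_singleton f hf, hga, ha]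

theorem rank_le_one_of_span_subsingleton {R M : Type*} [Ring R] [StrongRankCondition R]
    [AddCommGroup M] [Module R M] {s : Set M} (hs : s.Subsingleton)
    (hspan : Submodule.span R s = ⊤) : Module.rank R M ≤ 1 := by
  rw [← rank_top, ← hspan]
  exact (rank_span_le s).trans (Cardinal.mk_le_one_iff_set_subsingleton.2 hs)

theorem Submodule.span_range_mkQ_single {R Ω : Type*} [Ring R] (U : Submodule R (Ω →₀ R)) :
    span R (Set.range fun ω => U.mkQ (Finsupp.single ω 1)) = ⊤ := by
  rw [Set.range_comp' U.mkQ, span_image, ← Finsupp.coe_basisSingleOne, Module.Basis.span_eq,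
    map_top, range_mkQ]

theorem Submodule.mkQ_single_smul_congr {R G Ω : Type*} [Ring R] [Group G] [MulAction G Ω]
    {U : Submodule R (Ω →₀ R)}
    (hU : ∀ (g : G), ∀ x ∈ U, Finsupp.lmapDomain R R (fun ω : Ω => g • ω) x ∈ U) (g : G)
    (a b : Ω) (hab : U.mkQ (Finsupp.single a 1) = U.mkQ (Finsupp.single b 1)) :
    U.mkQ (Finsupp.single (g • a) 1) = U.mkQ (Finsupp.single (g • b) 1) := by
  have := congrArg (U.mapQ U (Finsupp.lmapDomain R R (g • ·)) (hU g)) hab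
  simpa [Finsupp.lmapDomain_apply, Finsupp.mapDomain_single] using this

theorem faithful_on_quotient_of_permutation_module_general (F : Type*) [Field F] (G : Type*) [Group G]
    (Ω : Type*) [MulAction G Ω] [FaithfulSMul G Ω]
    (hprim : IsPrimitiveAction G Ω)
    (U : Submodule F (Ω →₀ F))
    (hU : ∀ (g : G), ∀ x ∈ U, Finsupp.lmapDomain F F (fun ω : Ω => g • ω) x ∈ U)
    (hcodim : 2 ≤ Module.rank F ((Ω →₀ F) ⧸ U)) :
    ∀ g : G, (∀ x : Ω →₀ F, Finsupp.lmapDomain F F (fun ω : Ω => g • ω) x - x ∈ U) →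
      g = 1 := by
  intro g hg
  refine FaithfulSMul.eq_of_smul_eq_smul (α := Ω) fun ω => ?_
  by_contra hne
  set q : Ω → (Ω →₀ F) ⧸ U := fun ω => U.mkQ (Finsupp.single ω 1)
  have hgω : q (g • ω) = q ω := (Submodule.Quotient.eq U).2 <| by
    simpa [Finsupp.lmapDomain_apply, Finsupp.mapDomain_single] using hg (Finsupp.single ω 1)
  have hfiber : q ⁻¹' {q ω} = Set.univ :=
    (hprim.2 _ (isBlock_preimage_singleton q (Submodule.mkQ_single_smul_congr hU) ω)).resolve_left
      fun hsub => hne (by simpa using hsub hgω rfl)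
  have hconst : ∀ a, q a = q ω := Set.eq_univ_iff_forall.1 hfiber
  have hq : (Set.range q).Subsingleton := by
    rintro _ ⟨a, rfl⟩ _ ⟨b, rfl⟩
    rw [hconst a, hconst b]
  have := hcodim.trans (rank_le_one_of_span_subsingleton hq (Submodule.span_range_mkQ_single U))
  norm_num at this

/-- Let `G` act faithfully and primitively on `Ω`, with `G` not cyclic, and
let `U` be a `G`-invariant subspace of the permutation module `Ω →₀ F` whose quotient has
dimension at least `2`. Then `G` acts faithfully on the quotient `(Ω →₀ F) ⧸ U`. -/
theorem faithful_on_quotient_of_permutation_module (F : Type*) [Field F] (G : Type*) [Group G]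
    (Ω : Type*) [MulAction G Ω] [FaithfulSMul G Ω]
    (hprim : IsPrimitiveAction G Ω) (hnc : ¬ IsCyclic G)
    (U : Submodule F (Ω →₀ F))
    (hU : ∀ (g : G), ∀ x ∈ U, Finsupp.lmapDomain F F (fun ω : Ω => g • ω) x ∈ U)
    (hcodim : 2 ≤ Module.rank F ((Ω →₀ F) ⧸ U)) :
    ∀ g : G, (∀ x : Ω →₀ F, Finsupp.lmapDomain F F (fun ω : Ω => g • ω) x - x ∈ U) →
      g = 1 :=
  faithful_on_quotient_of_permutation_module_general F G Ω hprim U hU hcodim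
end

section
/- Let K be a group acting on a set Δ, let ℓ ≥ 1, let L ≤ Equiv.Perm (Fin ℓ) be a subgroup, and let G = K ≀ L = (Fin ℓ → K) ⋊ L act on Δ^ℓ = (Fin ℓ → Δ) in product action by ((h, σ) • f)(i) = h(i) • f(σ⁻¹ i). Then for any field F, lindim_F(K ≀ L, Δ^ℓ) ≤ ℓ · lindim_F(K, Δ). -/
def permMulAut {S K : Type*} [Group K] (σ : Equiv.Perm S) : MulAut (S → K) :=
  { Equiv.arrowCongr σ (Equiv.refl K) with
    map_mul' := fun _ _ => rfl }

def permAutHom (S K : Type*) [Group K] : Equiv.Perm S →* MulAut (S → K) where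
  toFun := permMulAut
  map_one' := MulEquiv.ext fun _ => funext fun _ => rfl
  map_mul' := fun _ _ => MulEquiv.ext fun _ => funext fun _ => rfl

/-- The wreath product `K ≀ L` of a group `K` with a subgroup `L ≤ Sym(Fin ℓ)`. -/
abbrev GroupWreath (K : Type*) [Group K] {l : ℕ} (L : Subgroup (Equiv.Perm (Fin l))) :=
  (Fin l → K) ⋊[(permAutHom (Fin l) K).comp L.subtype] ↥L

/-- The product action of `K ≀ L` on `Fin ℓ → Δ`: `((h, σ) • f) i = h i • f (σ⁻¹ i)`. -/
instance groupWreathProductAction (K : Type*) [Group K] (Δ : Type*) [MulAction K Δ]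
    {l : ℕ} (L : Subgroup (Equiv.Perm (Fin l))) :
    MulAction (GroupWreath K L) (Fin l → Δ) where
  smul g f := fun i => g.left i • f ((g.right : Equiv.Perm (Fin l))⁻¹ i)
  one_smul f := funext fun i => by
    show (1 : GroupWreath K L).left i •
      f (((1 : GroupWreath K L).right : Equiv.Perm (Fin l))⁻¹ i) = f i
    simp
  mul_smul g₁ g₂ f := funext fun i => by
    show (g₁ * g₂).left i • f ((((g₁ * g₂).right : Equiv.Perm (Fin l)))⁻¹ i)
      = g₁.left i • (g₂.left ((g₁.right : Equiv.Perm (Fin l))⁻¹ i) •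
          f ((g₂.right : Equiv.Perm (Fin l))⁻¹ ((g₁.right : Equiv.Perm (Fin l))⁻¹ i)))
    rw [SemidirectProduct.mul_left, SemidirectProduct.mul_right, Pi.mul_apply, mul_smul,
      Subgroup.coe_mul, mul_inv_rev, Equiv.Perm.mul_apply]
    rfl

/-!
A faithful representation `φ : Δ → V` of `K` gives a representation of `K ≀ L` on `V^ℓ`: the
tuple `f` goes to `(φ (f i))ᵢ`, the base group `Kˡ` acts coordinatewise through `ρ`, and `L`
permutes the coordinates. This has dimension `ℓ · dim V`; taking `V` of dimension
`lindim_F(K, Δ)` gives the bound, and when `lindim_F(K, Δ) = ⊤` the bound is trivial as `ℓ ≠ 0`.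
-/

open Module

section ActionRep

variable {F : Type*} [Field F] {V W : Type*} [AddCommGroup V] [Module F V]
  [AddCommGroup W] [Module F W]

def LinearEquiv.autCongr (e : V ≃ₗ[F] W) : (V ≃ₗ[F] V) ≃* (W ≃ₗ[F] W) :=
  (LinearMap.GeneralLinearGroup.generalLinearEquiv F V).symm.trans
    ((LinearMap.GeneralLinearGroup.congrLinearEquiv e).trans
      (LinearMap.GeneralLinearGroup.generalLinearEquiv F W))

theorem LinearEquiv.autCongr_apply (e : V ≃ₗ[F] W) (f : V ≃ₗ[F] V) (w : W) :
    e.autCongr f w = e (f (e.symm w)) :=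
  rfl

variable {G : Type*} [Group G] {Ω : Type*} [MulAction G Ω]

theorem IsActionRep.transport {ρ : G →* (V ≃ₗ[F] V)} {φ : Ω → V} (h : IsActionRep F ρ φ)
    (e : V ≃ₗ[F] W) : IsActionRep F (e.autCongr.toMonoidHom.comp ρ) (e ∘ φ) :=
  ⟨e.injective.comp h.1, fun g ω => by simp [LinearEquiv.autCongr_apply, h.2]⟩

theorem lindim_le_finrank [FiniteDimensional F V] {ρ : G →* (V ≃ₗ[F] V)} {φ : Ω → V}
    (h : IsActionRep F ρ φ) : lindim F G Ω ≤ finrank F V :=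
  iInf₂_le _ ⟨_, _, h.transport (finBasis F V).equivFun⟩

theorem exists_isActionRep_of_lindim_ne_top (h : lindim F G Ω ≠ ⊤) :
    ∃ (n : ℕ) (ρ : G →* ((Fin n → F) ≃ₗ[F] (Fin n → F))) (φ : Ω → Fin n → F),
      IsActionRep F ρ φ ∧ lindim F G Ω = n := by
  let Affords (n : ℕ) : Prop :=
    ∃ (ρ : G →* ((Fin n → F) ≃ₗ[F] (Fin n → F))) (φ : Ω → Fin n → F), IsActionRep F ρ φ
  have hlindim : lindim F G Ω = ⨅ n : Subtype Affords, (n : ℕ∞) := iInf_subtype'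
  have : Nonempty (Subtype Affords) := by
    by_contra hne
    have := not_nonempty_iff.mp hne
    exact h (hlindim.trans (iInf_of_empty _))
  obtain ⟨⟨n, ρ, φ, hρ⟩, hmin⟩ := ENat.exists_eq_iInf fun n : Subtype Affords => (n : ℕ∞)
  exact ⟨n, ρ, φ, hρ, hlindim.trans hmin.symm⟩

end ActionRep

section Wreath

theorem permAutHom_apply {S K : Type*} [Group K] (σ : Equiv.Perm S) (h : S → K) (i : S) :
    permAutHom S K σ h i = h (σ.symm i) :=
  rfl

variable {F : Type*} [Field F] {K : Type*} [Group K] {V : Type*} [AddCommGroup V] [Module F V]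
  {l : ℕ} (L : Subgroup (Equiv.Perm (Fin l)))

def wreathRep (ρ : K →* (V ≃ₗ[F] V)) :
    GroupWreath K L →* ((Fin l → V) ≃ₗ[F] (Fin l → V)) where
  toFun g :=
    (LinearEquiv.funCongrLeft F V ((g.right : Equiv.Perm (Fin l))⁻¹ : Equiv.Perm (Fin l))).trans
      (LinearEquiv.piCongrRight fun i => ρ (g.left i))
  map_one' := by
    ext v i
    simp [LinearEquiv.funCongrLeft_apply]
  map_mul' g₁ g₂ := by
    ext v i
    simp [LinearEquiv.funCongrLeft_apply, permAutHom_apply]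

variable {Δ : Type*} [MulAction K Δ]

theorem IsActionRep.wreath {ρ : K →* (V ≃ₗ[F] V)} {φ : Δ → V} (h : IsActionRep F ρ φ) :
    IsActionRep F (wreathRep L ρ) (φ ∘ · : (Fin l → Δ) → Fin l → V) :=
  ⟨h.1.comp_left, fun g _ => funext fun i => h.2 (g.left i) _⟩

end Wreath

/-- **Lemma 7.1.** For a group `K` acting on `Δ` and `L ≤ Sym(Fin ℓ)` with
`ℓ ≥ 1`, the wreath product in product action satisfies
`lindim_F(K ≀ L, Δ^ℓ) ≤ ℓ · lindim_F(K, Δ)`. -/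
theorem lindim_wreath_product_action_le (F : Type*) [Field F] (K : Type*) [Group K]
    (Δ : Type*) [MulAction K Δ] (l : ℕ) (hl : 1 ≤ l) (L : Subgroup (Equiv.Perm (Fin l))) :
    lindim F (GroupWreath K L) (Fin l → Δ) ≤ (l : ℕ∞) * lindim F K Δ := by
  rcases eq_or_ne (lindim F K Δ) ⊤ with htop | hfin
  · rw [htop, ENat.mul_top (Nat.cast_ne_zero.mpr (by omega))]
    exact le_top
  obtain ⟨n, ρ, φ, hρ, hn⟩ := exists_isActionRep_of_lindim_ne_top hfin
  calc lindim F (GroupWreath K L) (Fin l → Δ) ≤ finrank F (Fin l → Fin n → F) :=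
        lindim_le_finrank (hρ.wreath L)
    _ = (l : ℕ∞) * lindim F K Δ := by simp [finrank_pi_fintype, hn]
end
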